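/- Let λ > 0, α_L > 0, α_N > 0 be reals and let P_L : ℝ → ℝ be continuous with 0 ≤ P_L(r) ≤ 1 for all r ≥ 0; set P_N(r) = 1 − P_L(r). Define f_L(z) = 2π·z·λ·P_L(z)·exp(−2πλ∫₀^z P_L(r)·r dr) and f_N(z) = 2π·z·λ·P_N(z)·exp(−2πλ∫₀^z P_N(r)·r dr). Then ∫₀^∞ [ f_L(z)·exp(−2πλ∫₀^{z^{α_L/α_N}} P_N(r)·r dr) + f_N(z)·exp(−2πλ∫₀^{z^{α_N/α_L}} P_L(r)·r dr) ] dz = 1. -/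

import Mathlib

/-! With `c = 2πλ` and `a = α_L / α_N`, the probability that no LOS transmitter lies within `z`
and no NLOS transmitter within `z ^ a` is `S(z) = exp (-c (∫₀^z P_L r r dr + ∫₀^{z^a} P_N r r dr))`.
Its hazard `-S'` is the LOS term of the integrand plus the NLOS term pulled back along `z ↦ z ^ a`,
since the NLOS void probability at `w` with exponent `a⁻¹` is `S(w ^ a⁻¹)`. Substituting back,
the integral is `∫₀^∞ -S' = S(0) - S(∞) = 1`; `S(∞) = 0` because `P_L + P_N = 1` forces the
exponent to grow like `min(z, z ^ a) ^ 2 / 2`. -/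

open Real MeasureTheory intervalIntegral Set Filter Topology

noncomputable section

def radialPrimitive (u : ℝ → ℝ) (z : ℝ) : ℝ := ∫ r in (0:ℝ)..z, u r * r

section RadialPrimitive

variable {u v : ℝ → ℝ}

theorem hasDerivAt_radialPrimitive (hu : Continuous u) (z : ℝ) :
    HasDerivAt (radialPrimitive u) (u z * z) z :=
  have hc : Continuous fun r => u r * r := hu.mul continuous_id
  integral_hasDerivAt_right (hc.intervalIntegrable _ _) (hc.stronglyMeasurableAtFilter _ _)
    hc.continuousAt

theorem continuous_radialPrimitive (hu : Continuous u) : Continuous (radialPrimitive u) :=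
  continuous_iff_continuousAt.2 fun z => (hasDerivAt_radialPrimitive hu z).continuousAt

@[simp]
theorem radialPrimitive_zero (u : ℝ → ℝ) : radialPrimitive u 0 = 0 := integral_same

theorem radialPrimitive_monotoneOn (hu : Continuous u) (hu0 : ∀ r, 0 ≤ r → 0 ≤ u r) :
    MonotoneOn (radialPrimitive u) (Ici 0) := by
  intro s hs t _ hst
  have hc : Continuous fun r => u r * r := hu.mul continuous_id
  rw [radialPrimitive, radialPrimitive,
    ← integral_add_adjacent_intervals (hc.intervalIntegrable 0 s) (hc.intervalIntegrable s t)]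
  refine le_add_of_nonneg_right (integral_nonneg hst fun r hr => ?_)
  have hr0 : 0 ≤ r := le_trans hs hr.1
  exact mul_nonneg (hu0 r hr0) hr0

theorem radialPrimitive_add_of_add_eq_one (hu : Continuous u) (hv : Continuous v)
    (hsum : ∀ r, 0 ≤ r → u r + v r = 1) {m : ℝ} (hm : 0 ≤ m) :
    radialPrimitive u m + radialPrimitive v m = m ^ 2 / 2 := by
  have hcu : Continuous fun r => u r * r := hu.mul continuous_id
  have hcv : Continuous fun r => v r * r := hv.mul continuous_id
  have hid : EqOn (fun r => u r * r + v r * r) (fun r => r) (uIcc 0 m) := fun r hr => by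
    rw [uIcc_of_le hm] at hr
    simp only [← add_mul, hsum r hr.1, one_mul]
  rw [radialPrimitive, radialPrimitive,
    ← integral_add (hcu.intervalIntegrable 0 m) (hcv.intervalIntegrable 0 m),
    integral_congr hid, integral_id]
  ring

theorem sq_div_two_le_radialPrimitive_add (hu : Continuous u) (hv : Continuous v)
    (hu0 : ∀ r, 0 ≤ r → 0 ≤ u r) (hv0 : ∀ r, 0 ≤ r → 0 ≤ v r) (hsum : ∀ r, 0 ≤ r → u r + v r = 1)
    {m s t : ℝ} (hm : 0 ≤ m) (hms : m ≤ s) (hmt : m ≤ t) :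
    m ^ 2 / 2 ≤ radialPrimitive u s + radialPrimitive v t := by
  rw [← radialPrimitive_add_of_add_eq_one hu hv hsum hm]
  gcongr
  · exact radialPrimitive_monotoneOn hu hu0 hm (hm.trans hms) hms
  · exact radialPrimitive_monotoneOn hv hv0 hm (hm.trans hmt) hmt

end RadialPrimitive

/-- With `c = 2πλ`, `u = P_L`, `v = P_N`, `p = α_L / α_N`: the probability that no LOS transmitter
lies within `z` and no NLOS transmitter within `z ^ p`. -/
def voidProbability (c p : ℝ) (u v : ℝ → ℝ) (z : ℝ) : ℝ :=
  exp (-(c * (radialPrimitive u z + radialPrimitive v (z ^ p))))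

/-- For `u = P_L` this is `f_L(z) · exp (-2πλ ∫₀^{z^p} P_N r r dr)`, the density of the serving
link being LOS at distance `z`. -/
def servingDensity (c p : ℝ) (u v : ℝ → ℝ) (z : ℝ) : ℝ :=
  c * (u z * z) * voidProbability c p u v z

section VoidProbability

variable {c p : ℝ} {u v : ℝ → ℝ}

theorem voidProbability_zero (hp : p ≠ 0) : voidProbability c p u v 0 = 1 := by
  simp [voidProbability, zero_rpow hp]

theorem voidProbability_inv_rpow (hp : p ≠ 0) {x : ℝ} (hx : 0 ≤ x) :
    voidProbability c p⁻¹ v u (x ^ p) = voidProbability c p u v x := by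
  rw [voidProbability, voidProbability, rpow_rpow_inv hx hp, add_comm]

theorem continuous_voidProbability (hp : 0 ≤ p) (hu : Continuous u) (hv : Continuous v) :
    Continuous (voidProbability c p u v) := by
  have hrpow : Continuous fun z : ℝ => z ^ p := continuous_id.rpow_const fun _ => Or.inr hp
  have := continuous_radialPrimitive hu
  have := continuous_radialPrimitive hv
  unfold voidProbability
  fun_prop

theorem servingDensity_nonneg (hc : 0 ≤ c) (hu0 : ∀ r, 0 ≤ r → 0 ≤ u r) {z : ℝ} (hz : 0 ≤ z) :
    0 ≤ servingDensity c p u v z :=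
  mul_nonneg (mul_nonneg hc (mul_nonneg (hu0 z hz) hz)) (exp_pos _).le

theorem hasDerivAt_voidProbability (hp : p ≠ 0) (hu : Continuous u) (hv : Continuous v) {x : ℝ}
    (hx : 0 < x) :
    HasDerivAt (voidProbability c p u v)
      (-(servingDensity c p u v x + p * x ^ (p - 1) * servingDensity c p⁻¹ v u (x ^ p))) x := by
  have hrpow : HasDerivAt (fun z : ℝ => z ^ p) (p * x ^ (p - 1)) x :=
    hasDerivAt_rpow_const (Or.inl hx.ne')
  have hexponent : HasDerivAt (fun z => -(c * (radialPrimitive u z + radialPrimitive v (z ^ p))))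
      (-(c * (u x * x + v (x ^ p) * x ^ p * (p * x ^ (p - 1))))) x :=
    have hV : HasDerivAt (fun z => radialPrimitive v (z ^ p))
        (v (x ^ p) * x ^ p * (p * x ^ (p - 1))) x :=
      (hasDerivAt_radialPrimitive hv _).comp x hrpow
    (((hasDerivAt_radialPrimitive hu x).add hV).const_mul c).neg
  rw [servingDensity, servingDensity, voidProbability_inv_rpow hp hx.le]
  exact hexponent.exp.congr_deriv (by rw [voidProbability]; ring)

theorem tendsto_voidProbability_atTop (hc : 0 < c) (hp : 0 < p) (hu : Continuous u)
    (hv : Continuous v) (hu0 : ∀ r, 0 ≤ r → 0 ≤ u r) (hv0 : ∀ r, 0 ≤ r → 0 ≤ v r)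
    (hsum : ∀ r, 0 ≤ r → u r + v r = 1) :
    Tendsto (voidProbability c p u v) atTop (𝓝 0) := by
  set q := min 1 p
  have hq : 0 < q := lt_min one_pos hp
  have hlower : ∀ᶠ z in atTop,
      c * ((z ^ q) ^ 2 / 2) ≤ c * (radialPrimitive u z + radialPrimitive v (z ^ p)) := by
    filter_upwards [eventually_ge_atTop 1] with z hz
    have hzq_le : z ^ q ≤ z := by
      simpa using rpow_le_rpow_of_exponent_le hz (min_le_left 1 p)
    gcongr
    exact sq_div_two_le_radialPrimitive_add hu hv hu0 hv0 hsum (by positivity) hzq_le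
      (rpow_le_rpow_of_exponent_le hz (min_le_right 1 p))
  have hgrowth : Tendsto (fun z : ℝ => c * ((z ^ q) ^ 2 / 2)) atTop atTop :=
    (((tendsto_pow_atTop two_ne_zero).comp (tendsto_rpow_atTop hq)).atTop_div_const
      two_pos).const_mul_atTop hc
  exact tendsto_exp_neg_atTop_nhds_zero.comp (tendsto_atTop_mono' atTop hlower hgrowth)

theorem integral_servingDensity_add_servingDensity (hc : 0 < c) (hp : 0 < p) (hu : Continuous u)
    (hv : Continuous v) (hu0 : ∀ r, 0 ≤ r → 0 ≤ u r) (hv0 : ∀ r, 0 ≤ r → 0 ≤ v r)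
    (hsum : ∀ r, 0 ≤ r → u r + v r = 1) :
    ∫ z in Ioi 0, (servingDensity c p u v z + servingDensity c p⁻¹ v u z) = 1 := by
  set f := servingDensity c p u v
  set g := servingDensity c p⁻¹ v u
  set g' := fun x : ℝ => (|p| * x ^ (p - 1)) • g (x ^ p)
  have hS : Continuous (voidProbability c p u v) := continuous_voidProbability hp.le hu hv
  have hderiv : ∀ x ∈ Ioi (0:ℝ),
      HasDerivAt (fun z => -voidProbability c p u v z) (f x + g' x) x := fun x hx => by
    refine (hasDerivAt_voidProbability (c := c) hp.ne' hu hv hx).neg.congr_deriv ?_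
    simp only [neg_neg, g', abs_of_pos hp, smul_eq_mul]; rfl
  have hf0 : ∀ x ∈ Ioi (0:ℝ), 0 ≤ f x := fun x hx =>
    servingDensity_nonneg hc.le hu0 (le_of_lt hx)
  have hg'0 : ∀ x ∈ Ioi (0:ℝ), 0 ≤ g' x := fun x (hx : 0 < x) =>
    mul_nonneg (by positivity) (servingDensity_nonneg hc.le hv0 (by positivity))
  have hcont : ContinuousWithinAt (fun z => -voidProbability c p u v z) (Ici 0) 0 :=
    hS.neg.continuousWithinAt
  have hlim : Tendsto (fun z => -voidProbability c p u v z) atTop (𝓝 (-0)) :=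
    (tendsto_voidProbability_atTop hc hp hu hv hu0 hv0 hsum).neg
  have hnonneg : ∀ x ∈ Ioi (0:ℝ), 0 ≤ f x + g' x := fun x hx => add_nonneg (hf0 x hx) (hg'0 x hx)
  have hfg' : IntegrableOn (fun x => f x + g' x) (Ioi 0) :=
    integrableOn_Ioi_deriv_of_nonneg hcont hderiv hnonneg hlim
  have hf : IntegrableOn f (Ioi 0) := by
    refine integrable_of_le_of_le (g₁ := 0) ?_ ?_ ?_ (integrable_zero _ _ _) hfg'
    · exact ((continuous_const.mul (hu.mul continuous_id)).mul hS) |>.aestronglyMeasurable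
    · exact (ae_restrict_iff' measurableSet_Ioi).2 (ae_of_all _ hf0)
    · exact (ae_restrict_iff' measurableSet_Ioi).2 (ae_of_all _ fun x hx =>
        le_add_of_nonneg_right (hg'0 x hx))
  have hg' : IntegrableOn g' (Ioi 0) := by
    convert hfg'.sub hf using 1
    ext x
    simp only [Pi.sub_apply, add_sub_cancel_left]
  have hg : IntegrableOn g (Ioi 0) := (integrableOn_Ioi_comp_rpow_iff g hp.ne').1 hg'
  calc ∫ z in Ioi 0, (f z + g z)
      = (∫ z in Ioi 0, f z) + ∫ z in Ioi 0, g' z := by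
        rw [integral_add hf hg, integral_comp_rpow_Ioi g hp.ne']
    _ = ∫ z in Ioi 0, (f z + g' z) := (integral_add hf hg').symm
    _ = 1 := by
        rw [integral_Ioi_of_hasDerivAt_of_nonneg hcont hderiv hnonneg hlim,
          voidProbability_zero hp.ne']
        norm_num

end VoidProbability

/-- **Lemma 1 defines a valid probability density.**
With LOS probability `P_L ∈ [0,1]`, NLOS probability `P_N = 1 − P_L`, path-loss
exponents `α_L, α_N > 0`, and the densities
`f_L(z) = 2πzλP_L(z)exp(−2πλ∫₀^z P_L(r)r dr)` and
`f_N(z) = 2πzλP_N(z)exp(−2πλ∫₀^z P_N(r)r dr)`, the radial density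
`f_L(z)·exp(−2πλ∫₀^{z^{α_L/α_N}} P_N(r)r dr) + f_N(z)·exp(−2πλ∫₀^{z^{α_N/α_L}} P_L(r)r dr)`
integrates to one over `(0,∞)`. -/
theorem lemma1_density_integrates_to_one
    (lam α_L α_N : ℝ) (hlam : 0 < lam) (hαL : 0 < α_L) (hαN : 0 < α_N)
    (P_L : ℝ → ℝ) (hPcont : Continuous P_L)
    (hP0 : ∀ r : ℝ, 0 ≤ r → 0 ≤ P_L r) (hP1 : ∀ r : ℝ, 0 ≤ r → P_L r ≤ 1)
    (P_N : ℝ → ℝ) (hPN : ∀ r : ℝ, P_N r = 1 - P_L r)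
    (f_L f_N : ℝ → ℝ)
    (hfL : ∀ z : ℝ, f_L z =
      2 * Real.pi * z * lam * P_L z *
        Real.exp (-(2 * Real.pi * lam * ∫ r in (0:ℝ)..z, P_L r * r)))
    (hfN : ∀ z : ℝ, f_N z =
      2 * Real.pi * z * lam * P_N z *
        Real.exp (-(2 * Real.pi * lam * ∫ r in (0:ℝ)..z, P_N r * r))) :
    ∫ z in Set.Ioi (0:ℝ),
        (f_L z *
            Real.exp (-(2 * Real.pi * lam *
              ∫ r in (0:ℝ)..(z ^ (α_L / α_N)), P_N r * r)) +
          f_N z *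
            Real.exp (-(2 * Real.pi * lam *
              ∫ r in (0:ℝ)..(z ^ (α_N / α_L)), P_L r * r))) = 1 := by
  have hPN_cont : Continuous P_N := (continuous_const.sub hPcont).congr fun r => (hPN r).symm
  convert integral_servingDensity_add_servingDensity (c := 2 * π * lam) (by positivity)
    (div_pos hαL hαN) hPcont hPN_cont hP0 (fun r hr => by linarith [hPN r, hP1 r hr])
    (fun r _ => by rw [hPN]; ring) using 3 with z
  simp only [servingDensity, voidProbability, radialPrimitive, inv_div, hfL, hfN, mul_add, neg_add,
    exp_add]
  ring
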